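/- (Existence Lemma.) Let Γ₀ be a maximally Log-consistent set, M^c the canonical model for Γ₀, Δ ∈ [Γ₀]_⊞, and φ ∈ L_CPL. If ¬Iφ ∈ Δ, then either I φ̄ ∉ Δ, or there exists Γ ∈ [Γ₀]_⊞ such that Δ R^c Γ and ¬φ ∈ Γ. -/

import Mathlib

/-- Formulas of classical propositional logic `L_CPL` over a countable set
of atomic propositions (represented by natural numbers). -/
inductive CPL : Type
  | top : CPL
  | atom : ℕ → CPL
  | neg : CPL → CPL
  | or : CPL → CPL → CPL
  | and : CPL → CPL → CPL
  deriving DecidableEq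
/-- `Var(φ)`: the (finite) set of atomic propositions occurring in `φ`. -/
def CPL.var : CPL → Finset ℕ
  | .top => ∅
  | .atom p => {p}
  | .neg φ => φ.var
  | .or φ ψ => φ.var ∪ ψ.var
  | .and φ ψ => φ.var ∪ ψ.var

/-- `p̄ := p ∨ ¬p`. -/
def pbar (p : ℕ) : CPL := .or (.atom p) (.neg (.atom p))

/-- Conjunction of a list of `L_CPL` formulas (empty conjunction is `⊤`). -/
def conjList : List CPL → CPL
  | [] => .top
  | [α] => α
  | α :: β :: rest => .and α (conjList (β :: rest))

/-- `φ̄ := ⋀_{p ∈ Var(φ)} (p ∨ ¬p)`, with the conjuncts taken in the fixed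
(increasing) enumeration order of the atomic propositions. -/
def CPL.bar (φ : CPL) : CPL := conjList ((φ.var.sort (· ≤ ·)).map pbar)
/-- Formulas of the language `L_Int`, extending `L_CPL` (embedded via `of`) by
negation, disjunction, conjunction, the global modality `⊞` (`box`) and the
intention modality `I` (`int`), which applies only to `L_CPL` formulas. -/
inductive Form : Type
  | of : CPL → Form
  | neg : Form → Form
  | or : Form → Form → Form
  | and : Form → Form → Form
  | box : Form → Form
  | int : CPL → Form
  deriving DecidableEq
/-- Material implication in `L_Int`: `φ → ψ := ¬φ ∨ ψ`. -/
def Form.imp (φ ψ : Form) : Form := .or (.neg φ) ψ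

/-- Material biconditional in `L_Int`: `φ ↔ ψ := (φ → ψ) ∧ (ψ → φ)`. -/
def Form.iff (φ ψ : Form) : Form := .and (φ.imp ψ) (ψ.imp φ)

/-- `⊥ := ¬⊤`. -/
def Form.bot : Form := .neg (.of .top)

/-- Boolean evaluation of `L_CPL` formulas under a valuation of the atoms. -/
def CPL.eval (v : ℕ → Bool) : CPL → Bool
  | .top => true
  | .atom p => v p
  | .neg φ => !φ.eval v
  | .or φ ψ => φ.eval v || ψ.eval v
  | .and φ ψ => φ.eval v && ψ.eval v

/-- Boolean evaluation of `L_Int` formulas, treating `⊞`- and `I`-formulas as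
atoms (evaluated by `u`). -/
def Form.eval (v : ℕ → Bool) (u : Form → Bool) : Form → Bool
  | .of α => α.eval v
  | .neg φ => !φ.eval v u
  | .or φ ψ => φ.eval v u || ψ.eval v u
  | .and φ ψ => φ.eval v u && ψ.eval v u
  | .box φ => u (.box φ)
  | .int α => u (.int α)

/-- Classical propositional tautologies of `L_Int` (with modal formulas
treated as atoms). -/
def Taut (φ : Form) : Prop := ∀ v u, φ.eval v u = true

/-- Derivability in the proof system `Log`: classical tautologies and Modus
Ponens; `S5` axioms and necessitation for `⊞`; and the intention axioms
Ax1: `I⊤`; Ax2: `Iφ → Iφ̄`; Ax3: `Iφ → ¬I¬φ`; Ax4: `(Iφ ∧ Iψ) ↔ I(φ ∧ ψ)`;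
Ax5: `⊞(ψ → φ) → ((Iψ ∧ Iφ̄) → Iφ)`. -/
inductive Deriv : Set Form → Form → Prop
  | prem {Γ : Set Form} {φ : Form} : φ ∈ Γ → Deriv Γ φ
  | taut {Γ : Set Form} {φ : Form} : Taut φ → Deriv Γ φ
  | mp {Γ : Set Form} {φ ψ : Form} :
      Deriv Γ (φ.imp ψ) → Deriv Γ φ → Deriv Γ ψ
  | boxK {Γ : Set Form} (φ ψ : Form) :
      Deriv Γ ((Form.box (φ.imp ψ)).imp ((Form.box φ).imp (Form.box ψ)))
  | boxT {Γ : Set Form} (φ : Form) : Deriv Γ ((Form.box φ).imp φ)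
  | box5 {Γ : Set Form} (φ : Form) :
      Deriv Γ ((Form.neg (Form.box φ)).imp (Form.box (Form.neg (Form.box φ))))
  | nec {Γ : Set Form} {φ : Form} : Deriv ∅ φ → Deriv Γ (Form.box φ)
  | ax1 {Γ : Set Form} : Deriv Γ (Form.int .top)
  | ax2 {Γ : Set Form} (α : CPL) :
      Deriv Γ ((Form.int α).imp (Form.int α.bar))
  | ax3 {Γ : Set Form} (α : CPL) :
      Deriv Γ ((Form.int α).imp (Form.neg (Form.int (CPL.neg α))))
  | ax4 {Γ : Set Form} (α β : CPL) :
      Deriv Γ ((Form.and (.int α) (.int β)).iff (Form.int (.and α β)))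
  | ax5 {Γ : Set Form} (α β : CPL) :
      Deriv Γ ((Form.box ((Form.of β).imp (Form.of α))).imp
        ((Form.and (.int β) (.int α.bar)).imp (Form.int α)))

/-- A set of formulas is `Log`-consistent if `⊥` is not derivable from it. -/
def LogConsistent (Γ : Set Form) : Prop := ¬ Deriv Γ Form.bot

/-- A maximally `Log`-consistent set: consistent with no proper consistent
extension. -/
def MCS (Γ : Set Form) : Prop :=
  LogConsistent Γ ∧ ∀ Δ, LogConsistent Δ → Γ ⊆ Δ → Δ = Γ
/-- `Γ[⊞] = {φ : ⊞φ ∈ Γ}`. -/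
def boxSet (Γ : Set Form) : Set Form := {φ | Form.box φ ∈ Γ}

/-- `Γ[I] = {φ ∈ L_Int : Iψ ∧ ⊞(ψ → φ) ∈ Γ for some ψ ∈ L_CPL}`. -/
def intSet (Γ : Set Form) : Set Form :=
  {φ | ∃ ψ : CPL, Form.and (Form.int ψ) (Form.box ((Form.of ψ).imp φ)) ∈ Γ}
/-- `[Γ₀]_⊞`: the `∼⊞`-equivalence class of `Γ₀`, i.e. the maximally
`Log`-consistent sets `Δ` with `Γ₀[⊞] ⊆ Δ`. -/
def canonDomain (Γ₀ : Set Form) : Set (Set Form) :=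
  {Δ | MCS Δ ∧ boxSet Γ₀ ⊆ Δ}

/-! If `Iφ̄ ∈ Δ`, the set `Δ[I] ∪ {¬φ}` is consistent. Indeed `Δ[I]` contains every theorem
(witness `⊤`, by Ax1 and necessitation) and is closed under Modus Ponens (witnesses `ψ₁`, `ψ₂`
combine to `ψ₁ ∧ ψ₂` by Ax4), so it is closed under derivability; if it derived `φ`, then
`Iψ, ⊞(ψ → φ) ∈ Δ` for some `ψ`, and Ax5 together with `Iφ̄` would put `Iφ` into `Δ`, next to
`¬Iφ`. A Lindenbaum extension `Γ` of `Δ[I] ∪ {¬φ}` is the required world: it lies in `[Γ₀]_⊞`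
because `Γ₀[⊞] ⊆ Δ[⊞]` (axiom 4, derivable in S5) and `Δ[⊞] ⊆ Δ[I]` (witness `⊤`). -/

open Set

lemma Deriv.mono {Γ Γ' : Set Form} {φ : Form} (h : Deriv Γ φ) (hsub : Γ ⊆ Γ') :
    Deriv Γ' φ := by
  induction h with
  | prem h => exact .prem (hsub h)
  | taut h => exact .taut h
  | mp _ _ ih₁ ih₂ => exact .mp (ih₁ hsub) (ih₂ hsub)
  | boxK φ ψ => exact .boxK φ ψ
  | boxT φ => exact .boxT φ
  | box5 φ => exact .box5 φ
  | nec h => exact .nec h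
  | ax1 => exact .ax1
  | ax2 α => exact .ax2 α
  | ax3 α => exact .ax3 α
  | ax4 α β => exact .ax4 α β
  | ax5 α β => exact .ax5 α β

structure IsTheory (S : Set Form) : Prop where
  mem_of_deriv_empty : ∀ {φ : Form}, Deriv ∅ φ → φ ∈ S
  mem_of_imp_mem : ∀ {φ ψ : Form}, φ.imp ψ ∈ S → φ ∈ S → ψ ∈ S

lemma IsTheory.mem_of_deriv {S Γ : Set Form} {φ : Form} (hS : IsTheory S) (hΓ : Γ ⊆ S)
    (h : Deriv Γ φ) : φ ∈ S := by
  induction h with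
  | prem h => exact hΓ h
  | taut h => exact hS.mem_of_deriv_empty (.taut h)
  | mp _ _ ih₁ ih₂ => exact hS.mem_of_imp_mem (ih₁ hΓ) (ih₂ hΓ)
  | boxK φ ψ => exact hS.mem_of_deriv_empty (.boxK φ ψ)
  | boxT φ => exact hS.mem_of_deriv_empty (.boxT φ)
  | box5 φ => exact hS.mem_of_deriv_empty (.box5 φ)
  | nec h => exact hS.mem_of_deriv_empty (.nec h)
  | ax1 => exact hS.mem_of_deriv_empty .ax1
  | ax2 α => exact hS.mem_of_deriv_empty (.ax2 α)
  | ax3 α => exact hS.mem_of_deriv_empty (.ax3 α)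
  | ax4 α β => exact hS.mem_of_deriv_empty (.ax4 α β)
  | ax5 α β => exact hS.mem_of_deriv_empty (.ax5 α β)

section Tautologies

variable (φ ψ χ : Form)

lemma taut_imp_self : Taut (φ.imp φ) := by
  intro v u; simp only [Form.imp, Form.eval]; cases φ.eval v u <;> rfl

lemma taut_imp_imp_self : Taut (φ.imp (ψ.imp φ)) := by
  intro v u; simp only [Form.imp, Form.eval]; cases φ.eval v u <;> cases ψ.eval v u <;> rfl

lemma taut_imp_distrib : Taut ((χ.imp (φ.imp ψ)).imp ((χ.imp φ).imp (χ.imp ψ))) := by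
  intro v u; simp only [Form.imp, Form.eval]
  cases χ.eval v u <;> cases φ.eval v u <;> cases ψ.eval v u <;> rfl

lemma taut_imp_trans : Taut ((φ.imp ψ).imp ((ψ.imp χ).imp (φ.imp χ))) := by
  intro v u; simp only [Form.imp, Form.eval]
  cases φ.eval v u <;> cases ψ.eval v u <;> cases χ.eval v u <;> rfl

lemma taut_absurd : Taut (φ.imp ((Form.neg φ).imp Form.bot)) := by
  intro v u; simp only [Form.imp, Form.bot, Form.eval, CPL.eval]; cases φ.eval v u <;> rfl

lemma taut_by_contra : Taut (((Form.neg φ).imp Form.bot).imp φ) := by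
  intro v u; simp only [Form.imp, Form.bot, Form.eval, CPL.eval]; cases φ.eval v u <;> rfl

lemma taut_and_intro : Taut (φ.imp (ψ.imp (φ.and ψ))) := by
  intro v u; simp only [Form.imp, Form.eval]; cases φ.eval v u <;> cases ψ.eval v u <;> rfl

lemma taut_and_left : Taut ((φ.and ψ).imp φ) := by
  intro v u; simp only [Form.imp, Form.eval]; cases φ.eval v u <;> cases ψ.eval v u <;> rfl

lemma taut_and_right : Taut ((φ.and ψ).imp ψ) := by
  intro v u; simp only [Form.imp, Form.eval]; cases φ.eval v u <;> cases ψ.eval v u <;> rfl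

lemma taut_iff_imp : Taut ((φ.iff ψ).imp (φ.imp ψ)) := by
  intro v u; simp only [Form.imp, Form.iff, Form.eval]
  cases φ.eval v u <;> cases ψ.eval v u <;> rfl

lemma taut_imp_and_imp (α β : CPL) :
    Taut (((Form.of α).imp (φ.imp ψ)).imp
      (((Form.of β).imp φ).imp ((Form.of (α.and β)).imp ψ))) := by
  intro v u; simp only [Form.imp, Form.eval, CPL.eval]
  cases α.eval v <;> cases β.eval v <;> cases φ.eval v u <;> cases ψ.eval v u <;> rfl

end Tautologies

lemma Deriv.imp_intro {Γ : Set Form} {φ : Form} (ψ : Form) (h : Deriv Γ φ) :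
    Deriv Γ (ψ.imp φ) :=
  .mp (.taut (taut_imp_imp_self φ ψ)) h

lemma Deriv.imp_trans {Γ : Set Form} {φ ψ χ : Form}
    (h₁ : Deriv Γ (φ.imp ψ)) (h₂ : Deriv Γ (ψ.imp χ)) : Deriv Γ (φ.imp χ) :=
  .mp (.mp (.taut (taut_imp_trans φ ψ χ)) h₁) h₂

lemma isTheory_derivImp (Γ : Set Form) (χ : Form) :
    IsTheory {φ | Deriv Γ (χ.imp φ)} where
  mem_of_deriv_empty h := (h.mono (empty_subset Γ)).imp_intro χ
  mem_of_imp_mem h₁ h₂ := .mp (.mp (.taut (taut_imp_distrib _ _ _)) h₁) h₂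

lemma Deriv.deduction {Γ : Set Form} {χ φ : Form} (h : Deriv (insert χ Γ) φ) :
    Deriv Γ (χ.imp φ) :=
  (isTheory_derivImp Γ χ).mem_of_deriv
    (insert_subset (.taut (taut_imp_self χ)) fun _ hψ => (Deriv.prem hψ).imp_intro χ) h

lemma isTheory_derivFinite (Γ : Set Form) :
    IsTheory {φ | ∃ F ⊆ Γ, F.Finite ∧ Deriv F φ} where
  mem_of_deriv_empty h := ⟨∅, empty_subset Γ, finite_empty, h⟩
  mem_of_imp_mem := by
    rintro _ _ ⟨F₁, hF₁Γ, hF₁, h₁⟩ ⟨F₂, hF₂Γ, hF₂, h₂⟩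
    exact ⟨F₁ ∪ F₂, union_subset hF₁Γ hF₂Γ, hF₁.union hF₂,
      .mp (h₁.mono subset_union_left) (h₂.mono subset_union_right)⟩

lemma Deriv.exists_finite {Γ : Set Form} {φ : Form} (h : Deriv Γ φ) :
    ∃ F ⊆ Γ, F.Finite ∧ Deriv F φ :=
  (isTheory_derivFinite Γ).mem_of_deriv
    (fun ψ hψ => ⟨{ψ}, singleton_subset_iff.2 hψ, finite_singleton ψ, .prem rfl⟩) h

lemma logConsistent_insert_neg {Γ : Set Form} {φ : Form} (h : ¬ Deriv Γ φ) :
    LogConsistent (insert (Form.neg φ) Γ) :=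
  fun hbot => h (.mp (.taut (taut_by_contra φ)) hbot.deduction)

lemma lindenbaum {S : Set Form} (hS : LogConsistent S) : ∃ Γ, MCS Γ ∧ S ⊆ Γ := by
  have hchain : ∀ c ⊆ {T | LogConsistent T}, IsChain (· ⊆ ·) c → c.Nonempty →
      ∃ ub ∈ {T | LogConsistent T}, ∀ T ∈ c, T ⊆ ub := by
    intro c hc hchain hne
    refine ⟨⋃₀ c, fun hbot => ?_, fun _ => subset_sUnion_of_mem⟩
    obtain ⟨F, hFc, hF, hFbot⟩ := hbot.exists_finite
    obtain ⟨T, hT, hFT⟩ :=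
      hchain.directedOn.exists_mem_subset_of_finite_of_subset_sUnion hne hF hFc
    exact hc hT (hFbot.mono hFT)
  obtain ⟨Γ, hSΓ, hΓ⟩ := zorn_subset_nonempty _ hchain S hS
  exact ⟨Γ, ⟨hΓ.prop, fun Δ hΔ hΓΔ => (hΓ.eq_of_subset hΔ hΓΔ).symm⟩, hSΓ⟩

lemma Deriv.box_four (Γ : Set Form) (φ : Form) :
    Deriv Γ ((Form.box φ).imp (Form.box (Form.box φ))) := by
  set β := Form.box φ
  set γ := Form.neg (Form.box (Form.neg β))
  have taut_of_boxT : Taut (((Form.box (Form.neg β)).imp (Form.neg β)).imp (β.imp γ)) := by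
    intro v u; simp only [β, γ, Form.imp, Form.eval]
    cases u (Form.box φ) <;> cases u (Form.box (Form.neg β)) <;> rfl
  have taut_of_box5 : Taut (((Form.neg β).imp (Form.box (Form.neg β))).imp (γ.imp β)) := by
    intro v u; simp only [β, γ, Form.imp, Form.eval]
    cases u (Form.box φ) <;> cases u (Form.box (Form.neg β)) <;> rfl
  have hβγ : Deriv Γ (β.imp γ) := .mp (.taut taut_of_boxT) (.boxT _)
  have hγβ : Deriv ∅ (γ.imp β) := .mp (.taut taut_of_box5) (.box5 φ)
  -- `β → γ → ⊞γ → ⊞β`, by axioms T, 5 and K respectively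
  exact hβγ.imp_trans ((Deriv.box5 _).imp_trans (.mp (.boxK _ _) (.nec hγβ)))

namespace MCS

variable {Γ : Set Form}

lemma mem_of_deriv (hΓ : MCS Γ) {φ : Form} (h : Deriv Γ φ) : φ ∈ Γ := by
  have hcons : LogConsistent (insert φ Γ) := fun hbot => hΓ.1 (.mp hbot.deduction h)
  rw [← hΓ.2 _ hcons (subset_insert φ Γ)]
  exact mem_insert φ Γ

lemma notMem_of_neg_mem (hΓ : MCS Γ) {φ : Form} (h : Form.neg φ ∈ Γ) : φ ∉ Γ := fun hφ =>
  hΓ.1 (.mp (.mp (.taut (taut_absurd φ)) (.prem hφ)) (.prem h))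

lemma and_mem_iff (hΓ : MCS Γ) {φ ψ : Form} : φ.and ψ ∈ Γ ↔ φ ∈ Γ ∧ ψ ∈ Γ :=
  ⟨fun h => ⟨hΓ.mem_of_deriv (.mp (.taut (taut_and_left φ ψ)) (.prem h)),
      hΓ.mem_of_deriv (.mp (.taut (taut_and_right φ ψ)) (.prem h))⟩,
    fun ⟨hφ, hψ⟩ =>
      hΓ.mem_of_deriv (.mp (.mp (.taut (taut_and_intro φ ψ)) (.prem hφ)) (.prem hψ))⟩

lemma box_mem_of_imp (hΓ : MCS Γ) {φ ψ : Form} (h : Deriv ∅ (φ.imp ψ))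
    (hφ : Form.box φ ∈ Γ) : Form.box ψ ∈ Γ :=
  hΓ.mem_of_deriv (.mp (.mp (.boxK φ ψ) (.nec h)) (.prem hφ))

lemma box_mem_of_imp₂ (hΓ : MCS Γ) {φ ψ χ : Form} (h : Deriv ∅ (φ.imp (ψ.imp χ)))
    (hφ : Form.box φ ∈ Γ) (hψ : Form.box ψ ∈ Γ) : Form.box χ ∈ Γ :=
  hΓ.mem_of_deriv (.mp (.mp (.boxK ψ χ) (.prem (hΓ.box_mem_of_imp h hφ))) (.prem hψ))

lemma int_and_mem (hΓ : MCS Γ) {α β : CPL} (hα : Form.int α ∈ Γ) (hβ : Form.int β ∈ Γ) :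
    Form.int (α.and β) ∈ Γ :=
  hΓ.mem_of_deriv (.mp (.mp (.taut (taut_iff_imp _ _)) (.ax4 α β))
    (.prem (hΓ.and_mem_iff.2 ⟨hα, hβ⟩)))

lemma int_mem_of_mem_intSet (hΓ : MCS Γ) {φ : CPL} (hbar : Form.int φ.bar ∈ Γ)
    (h : Form.of φ ∈ intSet Γ) : Form.int φ ∈ Γ := by
  obtain ⟨ψ, hψ⟩ := h
  obtain ⟨hIψ, hbox⟩ := hΓ.and_mem_iff.1 hψ
  exact hΓ.mem_of_deriv (.mp (.mp (.ax5 φ ψ) (.prem hbox))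
    (.prem (hΓ.and_mem_iff.2 ⟨hIψ, hbar⟩)))

lemma isTheory_intSet (hΓ : MCS Γ) : IsTheory (intSet Γ) where
  mem_of_deriv_empty h := ⟨.top, hΓ.and_mem_iff.2
    ⟨hΓ.mem_of_deriv .ax1, hΓ.mem_of_deriv (.nec (h.imp_intro _))⟩⟩
  mem_of_imp_mem := by
    rintro φ ψ ⟨α, hα⟩ ⟨β, hβ⟩
    rw [hΓ.and_mem_iff] at hα hβ
    exact ⟨α.and β, hΓ.and_mem_iff.2 ⟨hΓ.int_and_mem hα.1 hβ.1,
      hΓ.box_mem_of_imp₂ (.taut (taut_imp_and_imp φ ψ α β)) hα.2 hβ.2⟩⟩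

lemma boxSet_subset_intSet (hΓ : MCS Γ) : boxSet Γ ⊆ intSet Γ := fun φ hφ =>
  ⟨.top, hΓ.and_mem_iff.2
    ⟨hΓ.mem_of_deriv .ax1, hΓ.box_mem_of_imp (.taut (taut_imp_imp_self φ _)) hφ⟩⟩

lemma boxSet_subset_boxSet (hΓ : MCS Γ) {Δ : Set Form} (h : boxSet Γ ⊆ Δ) :
    boxSet Γ ⊆ boxSet Δ :=
  fun φ hφ => h (hΓ.mem_of_deriv (.mp (Deriv.box_four Γ φ) (.prem hφ)))

end MCS

/-- Existence Lemma: Let `Γ₀` be maximally `Log`-consistent,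
`Δ ∈ [Γ₀]_⊞` and `φ ∈ L_CPL`. If `¬Iφ ∈ Δ`, then either `Iφ̄ ∉ Δ` or there is
`Γ ∈ [Γ₀]_⊞` with `Δ R^c Γ` (i.e. `Δ[I] ⊆ Γ`) and `¬φ ∈ Γ`. -/
theorem existence_lemma (Γ₀ Δ : Set Form) (hΓ₀ : MCS Γ₀)
    (hΔ : Δ ∈ canonDomain Γ₀) (φ : CPL)
    (h : Form.neg (Form.int φ) ∈ Δ) :
    Form.int φ.bar ∉ Δ ∨
      ∃ Γ ∈ canonDomain Γ₀, intSet Δ ⊆ Γ ∧ Form.neg (Form.of φ) ∈ Γ := by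
  obtain ⟨hΔ, hΓ₀Δ⟩ := hΔ
  refine or_iff_not_imp_left.2 fun hbar => ?_
  rw [not_not] at hbar
  have hφ : ¬ Deriv (intSet Δ) (Form.of φ) := fun hd =>
    hΔ.notMem_of_neg_mem h <|
      hΔ.int_mem_of_mem_intSet hbar (hΔ.isTheory_intSet.mem_of_deriv subset_rfl hd)
  obtain ⟨Γ, hΓ, hsub⟩ := lindenbaum (logConsistent_insert_neg hφ)
  have hintΓ : intSet Δ ⊆ Γ := (subset_insert _ _).trans hsub
  have hboxΓ : boxSet Γ₀ ⊆ Γ :=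
    ((hΓ₀.boxSet_subset_boxSet hΓ₀Δ).trans hΔ.boxSet_subset_intSet).trans hintΓ
  exact ⟨Γ, ⟨hΓ, hboxΓ⟩, hintΓ, hsub (mem_insert _ _)⟩
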